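/- An instance of Dyck-2 reachability is a yes-instance if and only if there exists a walk scheme for it. -/
import Mathlib


/-- The four-letter alphabet of Dyck-2: two kinds of opening and closing brackets. -/
inductive Sig2 : Type
  | o1 | c1 | o2 | c2
deriving DecidableEq

/-- The Dyck-2 language: the smallest language containing ε and closed under
concatenation and wrapping in either kind of matching brackets. -/
inductive IsDyck : List Sig2 → Prop
  | nil : IsDyck []
  | append {u v : List Sig2} : IsDyck u → IsDyck v → IsDyck (u ++ v)
  | br1 {u : List Sig2} : IsDyck u → IsDyck (Sig2.o1 :: u ++ [Sig2.c1])
  | br2 {u : List Sig2} : IsDyck u → IsDyck (Sig2.o2 :: u ++ [Sig2.c2])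

/-- `IsWalk E u v p` : `p` is a walk from `u` to `v` in the graph with edge set `E`. -/
def IsWalk {V : Type} (E : Set (V × V)) : V → V → List (V × V) → Prop
  | u, v, [] => u = v
  | u, v, e :: p => e ∈ E ∧ e.1 = u ∧ IsWalk E e.2 v p

/-- A walk is valid if its labels form a Dyck-2 word. -/
def IsValidWalk {V : Type} (E : Set (V × V)) (lab : V × V → Sig2) (u v : V)
    (p : List (V × V)) : Prop :=
  IsWalk E u v p ∧ IsDyck (p.map lab)

/-- Right-hand sides of productions of a walk scheme (for a nonterminal `⟨u,v⟩`):
`split w` is `⟨u,v⟩ → ⟨u,w⟩⟨w,v⟩`, `wrap x y` is `⟨u,v⟩ → (u,x) ⟨x,y⟩ (y,v)`,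
and `eps` is `⟨u,u⟩ → ε`. -/
inductive WSRhs (V : Type) : Type
  | split (w : V)
  | wrap (x y : V)
  | eps

/-- The edge relation of the dependency graph on nonterminals:
`q` occurs on the right-hand side of the (unique) production of `p ∈ N`. -/
def WSChild {V : Type} (N : Set (V × V)) (prod : V × V → WSRhs V)
    (p q : V × V) : Prop :=
  p ∈ N ∧ match prod p with
    | .split w => q = (p.1, w) ∨ q = (w, p.2)
    | .wrap x y => q = (x, y)
    | .eps => False

/-- A walk scheme for an instance `(G, lab, s, t)` of Dyck-2 reachability:
a context-free grammar with terminal symbols the edges, nonterminals `N ⊆ V × V`,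
axiom `⟨s,t⟩`, exactly one production per nonterminal of one of the three allowed
forms, whose dependency graph on nonterminals is acyclic. -/
structure WalkScheme {V : Type} (E : Set (V × V)) (lab : V × V → Sig2) (s t : V) where
  N : Set (V × V)
  prod : V × V → WSRhs V
  axiom_mem : (s, t) ∈ N
  prod_valid : ∀ u v : V, (u, v) ∈ N →
    match prod (u, v) with
    | .split w => (u, w) ∈ N ∧ (w, v) ∈ N
    | .wrap x y => (u, x) ∈ E ∧ (y, v) ∈ E ∧ (x, y) ∈ N ∧
        ((lab (u, x) = Sig2.o1 ∧ lab (y, v) = Sig2.c1) ∨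
         (lab (u, x) = Sig2.o2 ∧ lab (y, v) = Sig2.c2))
    | .eps => u = v
  acyclic : ∀ p : V × V, ¬ Relation.TransGen (WSChild N prod) p p

section DyckAux

open Classical

variable {V : Type} {E : Set (V × V)} {lab : V × V → Sig2}

theorem isWalk_append {u w v : V} {p q : List (V × V)}
    (hp : IsWalk E u w p) (hq : IsWalk E w v q) : IsWalk E u v (p ++ q) := by
  induction p generalizing u with
  | nil =>
      have h : u = w := hp
      subst h; exact hq
  | cons e p ih => exact ⟨hp.1, hp.2.1, ih hp.2.2⟩

theorem isWalk_append_split {u v : V} {p q : List (V × V)}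
    (h : IsWalk E u v (p ++ q)) : ∃ w, IsWalk E u w p ∧ IsWalk E w v q := by
  induction p generalizing u with
  | nil => exact ⟨u, rfl, h⟩
  | cons e p ih =>
      obtain ⟨w, h1, h2⟩ := ih h.2.2
      exact ⟨w, ⟨h.1, h.2.1, h1⟩, h2⟩

theorem dyck_decomp {w : List Sig2} (h : IsDyck w) (hne : w ≠ []) :
    (∃ u, IsDyck u ∧ w = Sig2.o1 :: u ++ [Sig2.c1]) ∨
    (∃ u, IsDyck u ∧ w = Sig2.o2 :: u ++ [Sig2.c2]) ∨
    (∃ u v, IsDyck u ∧ IsDyck v ∧ u ≠ [] ∧ v ≠ [] ∧ w = u ++ v) := by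
  induction h with
  | nil => exact absurd rfl hne
  | @append u v hu hv ihu ihv =>
      rcases eq_or_ne u [] with rfl | hu'
      · simpa using ihv (by simpa using hne)
      rcases eq_or_ne v [] with rfl | hv'
      · simpa using ihu (by simpa using hne)
      · exact Or.inr (Or.inr ⟨u, v, hu, hv, hu', hv', rfl⟩)
  | br1 h _ => exact Or.inl ⟨_, h, rfl⟩
  | br2 h _ => exact Or.inr (Or.inl ⟨_, h, rfl⟩)

/-- Dyck-2 reachability between two vertices. -/
def Reach (E : Set (V × V)) (lab : V × V → Sig2) (u v : V) : Prop :=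
  ∃ p, IsValidWalk E lab u v p

theorem reach_ex {u v : V} (h : Reach E lab u v) :
    ∃ n, ∃ p : List (V × V), p.length = n ∧ IsValidWalk E lab u v p := by
  obtain ⟨p, hp⟩ := h; exact ⟨p.length, p, rfl, hp⟩

/-- The minimal length of a valid walk (0 if none exists). -/
noncomputable def wsRank (E : Set (V × V)) (lab : V × V → Sig2) (pr : V × V) : ℕ :=
  if h : Reach E lab pr.1 pr.2 then Nat.find (reach_ex h) else 0

theorem wsRank_spec {u v : V} (h : Reach E lab u v) :
    ∃ p : List (V × V), p.length = wsRank E lab (u, v) ∧ IsValidWalk E lab u v p := by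
  simp only [wsRank, dif_pos h]
  exact Nat.find_spec (reach_ex h)

theorem wsRank_le {u v : V} {p : List (V × V)} (hp : IsValidWalk E lab u v p) :
    wsRank E lab (u, v) ≤ p.length := by
  have h : Reach E lab u v := ⟨p, hp⟩
  simp only [wsRank, dif_pos h]
  exact Nat.find_le ⟨p, rfl, hp⟩

theorem exists_goodRhs {u v : V} (h : Reach E lab u v) :
    ∃ r : WSRhs V,
      match r with
      | .split w => Reach E lab u w ∧ Reach E lab w v ∧
          wsRank E lab (u, w) < wsRank E lab (u, v) ∧
          wsRank E lab (w, v) < wsRank E lab (u, v)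
      | .wrap x y => (u, x) ∈ E ∧ (y, v) ∈ E ∧ Reach E lab x y ∧
          ((lab (u, x) = Sig2.o1 ∧ lab (y, v) = Sig2.c1) ∨
           (lab (u, x) = Sig2.o2 ∧ lab (y, v) = Sig2.c2)) ∧
          wsRank E lab (x, y) < wsRank E lab (u, v)
      | .eps => u = v := by
  obtain ⟨p, hlen, hwalk, hdy⟩ := wsRank_spec h
  rcases eq_or_ne p [] with rfl | hne
  · exact ⟨.eps, hwalk⟩
  have hmne : p.map lab ≠ [] := by simpa using hne
  rcases dyck_decomp hdy hmne with ⟨m, hm, hmeq⟩ | ⟨m, hm, hmeq⟩ |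
    ⟨m1, m2, hm1, hm2, hm1ne, hm2ne, hmeq⟩
  · -- wrap with brackets of kind 1
    obtain ⟨e, p', rfl, hle, hmp⟩ := List.map_eq_cons_iff.mp hmeq
    obtain ⟨q, l2, rfl, hq, hl2⟩ := List.map_eq_append_iff.mp hmp
    obtain ⟨f, l3, rfl, hlf, hl3⟩ := List.map_eq_cons_iff.mp hl2
    have hl3' : l3 = [] := by simpa using hl3
    subst hl3'
    obtain ⟨he, he1, hrest⟩ := hwalk
    obtain ⟨y, hq', hf⟩ := isWalk_append_split hrest
    obtain ⟨hfE, hf1, hf2⟩ := hf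
    have hf2' : f.2 = v := hf2
    subst he1; subst hf2'; subst hf1
    have hreach : Reach E lab e.2 f.1 := ⟨q, hq', by rw [hq]; exact hm⟩
    refine ⟨.wrap e.2 f.1, by simpa using he, by simpa using hfE, hreach,
      Or.inl ⟨by simpa using hle, by simpa using hlf⟩, ?_⟩
    have h1 := wsRank_le ⟨hq', show IsDyck (q.map lab) by rw [hq]; exact hm⟩
    have h2 : (e :: (q ++ [f])).length = q.length + 2 := by simp
    omega
  · -- wrap with brackets of kind 2
    obtain ⟨e, p', rfl, hle, hmp⟩ := List.map_eq_cons_iff.mp hmeq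
    obtain ⟨q, l2, rfl, hq, hl2⟩ := List.map_eq_append_iff.mp hmp
    obtain ⟨f, l3, rfl, hlf, hl3⟩ := List.map_eq_cons_iff.mp hl2
    have hl3' : l3 = [] := by simpa using hl3
    subst hl3'
    obtain ⟨he, he1, hrest⟩ := hwalk
    obtain ⟨y, hq', hf⟩ := isWalk_append_split hrest
    obtain ⟨hfE, hf1, hf2⟩ := hf
    have hf2' : f.2 = v := hf2
    subst he1; subst hf2'; subst hf1
    have hreach : Reach E lab e.2 f.1 := ⟨q, hq', by rw [hq]; exact hm⟩
    refine ⟨.wrap e.2 f.1, by simpa using he, by simpa using hfE, hreach,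
      Or.inr ⟨by simpa using hle, by simpa using hlf⟩, ?_⟩
    have h1 := wsRank_le ⟨hq', show IsDyck (q.map lab) by rw [hq]; exact hm⟩
    have h2 : (e :: (q ++ [f])).length = q.length + 2 := by simp
    omega
  · -- split
    obtain ⟨p1, p2, rfl, h1, h2⟩ := List.map_eq_append_iff.mp hmeq
    obtain ⟨w, hw1, hw2⟩ := isWalk_append_split hwalk
    have hd1 : IsDyck (p1.map lab) := by rw [h1]; exact hm1
    have hd2 : IsDyck (p2.map lab) := by rw [h2]; exact hm2
    have hp1 : p1 ≠ [] := by rintro rfl; exact hm1ne h1.symm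
    have hp2 : p2 ≠ [] := by rintro rfl; exact hm2ne h2.symm
    have hl1 : 0 < p1.length := List.length_pos_iff.mpr hp1
    have hl2 : 0 < p2.length := List.length_pos_iff.mpr hp2
    have hr1 := wsRank_le ⟨hw1, hd1⟩
    have hr2 := wsRank_le ⟨hw2, hd2⟩
    have hlen' : (p1 ++ p2).length = p1.length + p2.length := by simp
    exact ⟨.split w, ⟨p1, hw1, hd1⟩, ⟨p2, hw2, hd2⟩, by omega, by omega⟩

/-- The production function of the canonical walk scheme. -/
noncomputable def wsProd (E : Set (V × V)) (lab : V × V → Sig2) : V × V → WSRhs V :=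
  fun pr => if h : Reach E lab pr.1 pr.2 then Classical.choose (exists_goodRhs h) else .eps

theorem wsProd_spec {pr : V × V} (h : Reach E lab pr.1 pr.2) :
    (match wsProd E lab pr with
      | .split w => Reach E lab pr.1 w ∧ Reach E lab w pr.2 ∧
          wsRank E lab (pr.1, w) < wsRank E lab (pr.1, pr.2) ∧
          wsRank E lab (w, pr.2) < wsRank E lab (pr.1, pr.2)
      | .wrap x y => (pr.1, x) ∈ E ∧ (y, pr.2) ∈ E ∧ Reach E lab x y ∧
          ((lab (pr.1, x) = Sig2.o1 ∧ lab (y, pr.2) = Sig2.c1) ∨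
           (lab (pr.1, x) = Sig2.o2 ∧ lab (y, pr.2) = Sig2.c2)) ∧
          wsRank E lab (x, y) < wsRank E lab (pr.1, pr.2)
      | .eps => pr.1 = pr.2) := by
  simp only [wsProd, dif_pos h]
  exact Classical.choose_spec (exists_goodRhs h)

end DyckAux


/-- An instance of Dyck-2 reachability is a yes-instance iff there exists
a walk scheme for it. -/
theorem dyck2Reach_yes_iff_exists_walkScheme
    {V : Type} [Fintype V] (E : Set (V × V)) (lab : V × V → Sig2) (s t : V) :
    (∃ p : List (V × V), IsValidWalk E lab s t p) ↔
      Nonempty (WalkScheme E lab s t) := by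
  constructor
  · rintro ⟨p, hp⟩
    have hst : Reach E lab s t := ⟨p, hp⟩
    refine ⟨⟨{pr : V × V | Reach E lab pr.1 pr.2}, wsProd E lab, hst, ?_, ?_⟩⟩
    · intro u v huv
      have huv' : Reach E lab (u, v).1 (u, v).2 := huv
      have hs := wsProd_spec huv'
      rcases hpr : wsProd E lab (u, v) with w | ⟨x, y⟩ | _ <;> simp only [hpr] at hs ⊢
      · exact ⟨hs.1, hs.2.1⟩
      · exact ⟨hs.1, hs.2.1, hs.2.2.1, hs.2.2.2.1⟩
      · exact hs
    · intro pr hcyc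
      have step : ∀ a b : V × V,
          WSChild {pr : V × V | Reach E lab pr.1 pr.2} (wsProd E lab) a b →
          wsRank E lab b < wsRank E lab a := by
        rintro a b ⟨ha, hmatch⟩
        have ha' : Reach E lab a.1 a.2 := ha
        have hs := wsProd_spec ha'
        have hpe : wsRank E lab (a.1, a.2) = wsRank E lab a := by
          congr
        rcases hpr : wsProd E lab a with w | ⟨x, y⟩ | _ <;> simp only [hpr] at hs hmatch
        · have hmatch' : b = (a.1, w) ∨ b = (w, a.2) := hmatch
          rcases hmatch' with rfl | rfl
          · rw [← hpe]; exact hs.2.2.1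
          · rw [← hpe]; exact hs.2.2.2
        · have hmatch' : b = (x, y) := hmatch
          subst hmatch'
          rw [← hpe]; exact hs.2.2.2.2
      have key : ∀ a b : V × V,
          Relation.TransGen (WSChild {pr : V × V | Reach E lab pr.1 pr.2} (wsProd E lab)) a b →
          wsRank E lab b < wsRank E lab a := by
        intro a b h
        induction h with
        | single h1 => exact step _ _ h1
        | tail _ h2 ih => exact lt_trans (step _ _ h2) ih
      exact absurd (key pr pr hcyc) (lt_irrefl _)
  · rintro ⟨ws⟩
    have hwf : WellFounded
        (fun a b : V × V => Relation.TransGen (WSChild ws.N ws.prod) b a) := by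
      have ht : IsTrans (V × V)
          (fun a b : V × V => Relation.TransGen (WSChild ws.N ws.prod) b a) :=
        ⟨fun a b c h1 h2 => h2.trans h1⟩
      have hi : IsIrrefl (V × V)
          (fun a b : V × V => Relation.TransGen (WSChild ws.N ws.prod) b a) :=
        ⟨fun a h => ws.acyclic a h⟩
      exact Finite.wellFounded_of_trans_of_irrefl _
    have main : ∀ pr : V × V, pr ∈ ws.N → Reach E lab pr.1 pr.2 := by
      refine fun pr => hwf.induction (C := fun pr => pr ∈ ws.N → Reach E lab pr.1 pr.2) pr ?_
      rintro ⟨u, v⟩ ih hmem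
      have hv := ws.prod_valid u v hmem
      rcases hpr : ws.prod (u, v) with w | ⟨x, y⟩ | _ <;> simp only [hpr] at hv
      · -- split
        have c1 : WSChild ws.N ws.prod (u, v) (u, w) :=
          ⟨hmem, by simp only [hpr]; left; trivial⟩
        have c2 : WSChild ws.N ws.prod (u, v) (w, v) :=
          ⟨hmem, by simp only [hpr]; right; trivial⟩
        obtain ⟨p1, hw1, hd1⟩ := ih (u, w) (Relation.TransGen.single c1) hv.1
        obtain ⟨p2, hw2, hd2⟩ := ih (w, v) (Relation.TransGen.single c2) hv.2
        refine ⟨p1 ++ p2, isWalk_append hw1 hw2, ?_⟩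
        rw [List.map_append]
        exact IsDyck.append hd1 hd2
      · -- wrap
        have c : WSChild ws.N ws.prod (u, v) (x, y) := ⟨hmem, by simp only [hpr]⟩
        obtain ⟨q, hwq, hdq⟩ := ih (x, y) (Relation.TransGen.single c) hv.2.2.1
        refine ⟨(u, x) :: (q ++ [(y, v)]), ?_, ?_⟩
        · exact ⟨hv.1, rfl, isWalk_append hwq ⟨hv.2.1, rfl, rfl⟩⟩
        · rcases hv.2.2.2 with ⟨h1, h2⟩ | ⟨h1, h2⟩
          · simp only [List.map_cons, List.map_append, List.map_nil, h1, h2]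
            exact IsDyck.br1 hdq
          · simp only [List.map_cons, List.map_append, List.map_nil, h1, h2]
            exact IsDyck.br2 hdq
      · -- eps
        have huv : u = v := hv
        subst huv
        exact ⟨[], rfl, IsDyck.nil⟩
    exact main (s, t) ws.axiom_mem
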